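/- arXiv:2605.28677 — 4 statements merged into one kernel-verified Lean document; each statement's English description precedes it below -/
import Mathlib

section
/- For every multiindex β and every constant C > 0, the set of populated multiindices γ with |γ|_≺ < C is finite. In particular, for every β the set of populated γ with γ ≺ β is finite. -/
/-- Polynomial multiindices `n ∈ ℕ^{1+d}`. -/
abbrev PIdx (d : ℕ) := Fin (d + 1) →₀ ℕ

/-- Multiindices `β` over `{k : ℕ}` (nonlinearity components) and `ℕ^{1+d}`
(polynomial components): the first component records the values `β(k)`,
the second the values `β(n)`. -/
abbrev MIdx (d : ℕ) := (ℕ →₀ ℕ) × (PIdx d →₀ ℕ)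

/-- Parabolic degree `|n| = 2 n₀ + n₁ + ⋯ + n_d`. -/
def pDeg {d : ℕ} (n : PIdx d) : ℕ := n 0 + n.sum fun _ v => v

/-- `Σ_k β(k)`. -/
def kSum {d : ℕ} (β : MIdx d) : ℕ := β.1.sum fun _ v => v

/-- `Σ_n β(n)`. -/
def nSum {d : ℕ} (β : MIdx d) : ℕ := β.2.sum fun _ v => v

/-- `Σ_n |n| β(n)`. -/
def npSum {d : ℕ} (β : MIdx d) : ℕ := β.2.sum fun n v => pDeg n * v

/-- Homogeneity `|β| = α(1 + (k̲−1) Σ_k β(k) − Σ_n β(n)) + 2 Σ_k β(k) + Σ_n |n| β(n)`. -/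
noncomputable def homog {d : ℕ} (α : ℝ) (kb : ℕ) (β : MIdx d) : ℝ :=
  α * (1 + ((kb : ℝ) - 1) * (kSum β : ℝ) - (nSum β : ℝ))
    + 2 * (kSum β : ℝ) + (npSum β : ℝ)

/-- The bracket `[β] = Σ_k (k−1) β(k) − Σ_n β(n)`. -/
def brk {d : ℕ} (β : MIdx d) : ℤ :=
  β.1.sum (fun k v => ((k : ℤ) - 1) * (v : ℤ)) - β.2.sum (fun _ v => (v : ℤ))

/-- The order `|β|_≺ = |β| + (D/2)(1 + [β])`. -/
noncomputable def ordIdx {d : ℕ} (α : ℝ) (kb : ℕ) (D : ℝ) (β : MIdx d) : ℝ :=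
  homog α kb β + D / 2 * (1 + (brk β : ℝ))

/-- `β` is populated: `β = δ_n`, or `β = δ_{k̲} + δ_{n₁} + ⋯ + δ_{n_{k̲}}`,
or `[β] ≥ 0`. -/
def Populated {d : ℕ} (kb : ℕ) (β : MIdx d) : Prop :=
  (∃ n : PIdx d, β = (0, Finsupp.single n 1)) ∨
    (β.1 = Finsupp.single kb 1 ∧ nSum β = kb) ∨
      0 ≤ brk β

section Aux

open Finsupp

variable {d : ℕ}

lemma ordIdx_expand (α : ℝ) (kb : ℕ) (D : ℝ) (γ : MIdx d) :
    ordIdx α kb D γ = α + (2 + ((kb : ℝ) - 1) * α) * (kSum γ : ℝ)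
      + (-α) * (nSum γ : ℝ) + (npSum γ : ℝ) + D / 2 * (1 + (brk γ : ℝ)) := by
  unfold ordIdx homog; ring

lemma brk_eq (γ : MIdx d) :
    brk γ = γ.1.sum (fun k v => ((k : ℤ) - 1) * (v : ℤ)) - (nSum γ : ℤ) := by
  unfold brk nSum
  congr 1
  rw [Finsupp.sum, Finsupp.sum, Nat.cast_sum]

set_option maxHeartbeats 1000000 in
lemma populated_aux {d : ℕ} (α D : ℝ) (kb : ℕ) (hkb : 3 ≤ kb)
    (hα : α < 0) (ha : 0 < 2 + ((kb : ℝ) - 1) * α) (hD : 3 ≤ D)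
    (C : ℝ) (hC : 0 < C) :
    {γ : MIdx d | (∀ k ∈ γ.1.support, kb ≤ k ∧ Odd k) ∧ Populated kb γ ∧
      ordIdx α kb D γ < C}.Finite := by
  set E : ℝ := C - α with hE
  have hE0 : 0 < E := by simp only [hE]; linarith
  have hαpos : 0 < -α := by linarith
  set Mr : ℝ := E + 2 * E / 3 + E / (-α) + (kb : ℝ) with hMr
  have hEMr : E ≤ Mr := by
    have h1 : 0 ≤ 2 * E / 3 := by positivity
    have h2 : 0 ≤ E / (-α) := by positivity
    have h3 : (0:ℝ) ≤ (kb:ℝ) := by positivity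
    simp only [hMr]; linarith
  have hkbMr : (kb : ℝ) ≤ Mr := by
    have h1 : 0 ≤ 2 * E / 3 := by positivity
    have h2 : 0 ≤ E / (-α) := by positivity
    simp only [hMr]; linarith
  have hSMr : 2 * E / 3 + E / (-α) ≤ Mr := by
    have h3 : (0:ℝ) ≤ (kb:ℝ) := by positivity
    simp only [hMr]; linarith
  have hkb3 : (3:ℝ) ≤ (kb:ℝ) := by exact_mod_cast hkb
  -- key bounds
  have key : ∀ γ : MIdx d, (∀ k ∈ γ.1.support, kb ≤ k ∧ Odd k) → Populated kb γ →
      ordIdx α kb D γ < C →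
      ((nSum γ : ℝ) ≤ Mr ∧ (npSum γ : ℝ) ≤ Mr ∧
        ∀ k ∈ γ.1.support, ((k : ℝ) - 1) * (γ.1 k : ℝ) ≤ Mr) := by
    intro γ hsupp hpop hlt
    rcases hpop with ⟨n, hn⟩ | ⟨h1, h2⟩ | hb
    · -- γ = (0, single n 1)
      have hk : kSum γ = 0 := by simp [kSum, hn]
      have hN : nSum γ = 1 := by simp [nSum, hn, Finsupp.sum_single_index]
      have hP : npSum γ = pDeg n := by simp [npSum, hn, Finsupp.sum_single_index]
      have hbrk : brk γ = -1 := by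
        rw [brk_eq, hn]; simp [Finsupp.sum_single_index, nSum]
      have hord : ordIdx α kb D γ = (npSum γ : ℝ) := by
        rw [ordIdx_expand, hk, hN, hbrk, hP]; push_cast; ring
      refine ⟨by rw [hN]; push_cast; linarith, ?_, ?_⟩
      · rw [← hord] at *; linarith
      · intro k hk'
        rw [hn] at hk'; simp at hk'
    · -- γ.1 = single kb 1
      have hk : kSum γ = 1 := by
        simp [kSum, h1, Finsupp.sum_single_index]
      have hS : γ.1.sum (fun k v => ((k : ℤ) - 1) * (v : ℤ)) = (kb : ℤ) - 1 := by
        rw [h1, Finsupp.sum_single_index] <;> simp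
      have hbrk : brk γ = -1 := by
        rw [brk_eq, hS, h2]; ring
      have hord : ordIdx α kb D γ = 2 + (npSum γ : ℝ) := by
        rw [ordIdx_expand, hk, hbrk, h2]; push_cast; ring
      refine ⟨by rw [h2]; linarith, by rw [hord] at hlt; linarith, ?_⟩
      intro k hk'
      rw [h1] at hk'
      rcases Finset.mem_singleton.1 (Finsupp.support_single_subset hk') with rfl
      have : γ.1 k = 1 := by rw [h1]; simp
      rw [this]
      push_cast
      linarith
    · -- 0 ≤ brk γ
      rw [ordIdx_expand] at hlt
      have t1 : 0 ≤ (2 + ((kb : ℝ) - 1) * α) * (kSum γ : ℝ) :=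
        mul_nonneg ha.le (by positivity)
      have t2 : 0 ≤ (-α) * (nSum γ : ℝ) := mul_nonneg hαpos.le (by positivity)
      have t3 : (0:ℝ) ≤ (npSum γ : ℝ) := by positivity
      have hbr : (0:ℝ) ≤ (brk γ : ℝ) := by exact_mod_cast hb
      have t4 : 0 ≤ D / 2 * (1 + (brk γ : ℝ)) :=
        mul_nonneg (by linarith) (by linarith)
      have hNb : (nSum γ : ℝ) ≤ E / (-α) := by
        rw [le_div_iff₀ hαpos]
        nlinarith
      have hBb : (brk γ : ℝ) ≤ 2 * E / 3 := by
        have h5 : (3:ℝ) / 2 * (1 + (brk γ : ℝ)) ≤ D / 2 * (1 + (brk γ : ℝ)) :=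
          mul_le_mul_of_nonneg_right (by linarith) (by linarith)
        nlinarith
      refine ⟨le_trans hNb (by linarith), by linarith, ?_⟩
      intro k hk'
      have hterm : ((k : ℤ) - 1) * (γ.1 k : ℤ) ≤
          γ.1.sum (fun k v => ((k : ℤ) - 1) * (v : ℤ)) := by
        rw [Finsupp.sum]
        refine Finset.single_le_sum (f := fun i : ℕ => ((i : ℤ) - 1) * (γ.1 i : ℤ)) ?_ hk'
        intro i hi
        have h3i : 3 ≤ i := le_trans hkb (hsupp i hi).1
        have : (1:ℤ) ≤ (i:ℤ) := by exact_mod_cast Nat.one_le_of_lt h3i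
        exact mul_nonneg (by linarith) (Int.natCast_nonneg _)
      have hSb : (γ.1.sum (fun k v => ((k : ℤ) - 1) * (v : ℤ)) : ℝ) ≤ Mr := by
        have h6 : (γ.1.sum (fun k v => ((k : ℤ) - 1) * (v : ℤ)) : ℝ)
            = (brk γ : ℝ) + (nSum γ : ℝ) := by
          rw [brk_eq]; push_cast; ring
        rw [h6]
        calc (brk γ : ℝ) + (nSum γ : ℝ) ≤ 2 * E / 3 + E / (-α) := by linarith
          _ ≤ Mr := hSMr
      calc ((k : ℝ) - 1) * (γ.1 k : ℝ)
          = (((k : ℤ) - 1) * (γ.1 k : ℤ) : ℤ) := by push_cast; ring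
        _ ≤ (γ.1.sum (fun k v => ((k : ℤ) - 1) * (v : ℤ)) : ℝ) := by exact_mod_cast hterm
        _ ≤ Mr := hSb
  -- the enclosing finite set
  obtain ⟨M, hMle⟩ : ∃ M : ℕ, Mr ≤ (M : ℝ) := ⟨⌈Mr⌉₊, Nat.le_ceil Mr⟩
  set F : ℕ →₀ ℕ := Finsupp.indicator (Finset.range (M + 2)) (fun _ _ => M) with hF
  set cM : PIdx d := Finsupp.equivFunOnFinite.symm (fun _ => M) with hcM
  set T : Finset (PIdx d) := (Set.finite_Iic cM).toFinset with hT
  set G : PIdx d →₀ ℕ := Finsupp.indicator T (fun _ _ => M) with hG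
  apply Set.Finite.subset (((Set.finite_Iic F).prod (Set.finite_Iic G)))
  rintro γ ⟨hsupp, hpop, hlt⟩
  obtain ⟨hN, hP, hterm⟩ := key γ hsupp hpop hlt
  have hNM : nSum γ ≤ M := by exact_mod_cast le_trans hN hMle
  have hPM : npSum γ ≤ M := by exact_mod_cast le_trans hP hMle
  constructor
  · -- γ.1 ≤ F
    rw [Set.mem_Iic, Finsupp.le_def]
    intro k
    by_cases hk : γ.1 k = 0
    · simp [hk]
    · have hks : k ∈ γ.1.support := Finsupp.mem_support_iff.2 hk
      have h3k : 3 ≤ k := le_trans hkb (hsupp k hks).1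
      have h1k : (1:ℝ) ≤ (γ.1 k : ℝ) := by
        exact_mod_cast Nat.one_le_iff_ne_zero.2 hk
      have hk1 : (2:ℝ) ≤ (k:ℝ) - 1 := by
        have : (3:ℝ) ≤ (k:ℝ) := by exact_mod_cast h3k
        linarith
      have htk := hterm k hks
      have e1 : (γ.1 k : ℝ) ≤ ((k:ℝ) - 1) * (γ.1 k : ℝ) := by nlinarith
      have e2 : (k:ℝ) - 1 ≤ ((k:ℝ) - 1) * (γ.1 k : ℝ) := by nlinarith
      have hvk : γ.1 k ≤ M := by
        have : (γ.1 k : ℝ) ≤ (M : ℝ) := by linarith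
        exact_mod_cast this
      have hkM : k ∈ Finset.range (M + 2) := by
        rw [Finset.mem_range]
        have : (k : ℝ) ≤ (M : ℝ) + 1 := by linarith
        have : k ≤ M + 1 := by exact_mod_cast this
        omega
      rw [hF, Finsupp.indicator_of_mem hkM]
      exact hvk
  · -- γ.2 ≤ G
    rw [Set.mem_Iic, Finsupp.le_def]
    intro n
    by_cases hn : γ.2 n = 0
    · simp [hn]
    · have hns : n ∈ γ.2.support := Finsupp.mem_support_iff.2 hn
      have hvn : γ.2 n ≤ nSum γ :=
        Finset.single_le_sum (f := fun n => γ.2 n) (fun _ _ => Nat.zero_le _) hns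
      have hpn : pDeg n ≤ npSum γ := by
        have h1 : pDeg n * 1 ≤ pDeg n * γ.2 n :=
          Nat.mul_le_mul_left _ (Nat.one_le_iff_ne_zero.2 hn)
        have h2 : pDeg n * γ.2 n ≤ npSum γ :=
          Finset.single_le_sum (f := fun n => pDeg n * γ.2 n)
            (fun _ _ => Nat.zero_le _) hns
        omega
      have hnT : n ∈ T := by
        rw [hT, Set.Finite.mem_toFinset, Set.mem_Iic, Finsupp.le_def]
        intro i
        have hiv : n i ≤ pDeg n := by
          by_cases hni : n i = 0
          · simp [hni]
          · have : n i ≤ n.sum fun _ v => v :=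
              Finset.single_le_sum (f := fun i => n i) (fun _ _ => Nat.zero_le _)
                (Finsupp.mem_support_iff.2 hni)
            unfold pDeg; omega
        have : n i ≤ M := le_trans hiv (le_trans hpn hPM)
        simpa [hcM] using this
      rw [hG, Finsupp.indicator_of_mem hnT]
      exact le_trans hvn hNM

end Aux

/-- for every `C > 0` the set of populated multiindices `γ`
(over `{k odd, k ≥ k̲} ∪ ℕ^{1+d}`) with `|γ|_≺ < C` is finite; in particular,
for every `β` the set of populated `γ ≺ β` is finite. -/
theorem populated_below_order_finite {d : ℕ} (α D : ℝ) (kb : ℕ) (hkb : 3 ≤ kb)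
    (hkbodd : Odd kb) (hα : α < 0) (hirr : Irrational α)
    (ha : 0 < 2 + ((kb : ℝ) - 1) * α) (hD : 3 ≤ D) :
    (∀ C : ℝ, 0 < C →
      {γ : MIdx d | (∀ k ∈ γ.1.support, kb ≤ k ∧ Odd k) ∧ Populated kb γ ∧
        ordIdx α kb D γ < C}.Finite) ∧
    (∀ β : MIdx d,
      {γ : MIdx d | (∀ k ∈ γ.1.support, kb ≤ k ∧ Odd k) ∧ Populated kb γ ∧
        ordIdx α kb D γ < ordIdx α kb D β}.Finite) := by
  constructor
  · intro C hC
    exact populated_aux α D kb hkb hα ha hD C hC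
  · intro β
    have hC : 0 < max (ordIdx α kb D β) 1 := lt_of_lt_of_le one_pos (le_max_right _ _)
    apply Set.Finite.subset (populated_aux α D kb hkb hα ha hD _ hC)
    rintro γ ⟨h1, h2, h3⟩
    exact ⟨h1, h2, lt_of_lt_of_le h3 (le_max_left _ _)⟩
end

section
/- If β is populated, then |δ_{n=0}|_≺ ≤ |β|_≺, i.e. the multiindex δ_{n=0} (order zero) is the minimal populated multiindex with respect to the order ≺. -/
/-- if `β` is populated then `|δ_{n=0}|_≺ ≤ |β|_≺`, i.e. the
multiindex `δ_{n=0}` is minimal among populated multiindices for the order `≺`. -/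
theorem deltaZero_minimal {d : ℕ} (α D : ℝ) (kb : ℕ) (hkb : 3 ≤ kb)
    (hα : α < 0) (ha : 0 < 2 + ((kb : ℝ) - 1) * α) (hD : 3 ≤ D)
    (hαD : 0 < α + D / 2) (β : MIdx d) (hβ : Populated kb β) :
    ordIdx α kb D ((0, Finsupp.single (0 : PIdx d) 1) : MIdx d) ≤ ordIdx α kb D β := by

  have hLHS : ordIdx α kb D ((0, Finsupp.single (0 : PIdx d) 1) : MIdx d) = 0 := by
    simp [ordIdx, homog, kSum, nSum, npSum, brk, pDeg, Finsupp.sum_zero_index,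
      Finsupp.sum_single_index]
  rw [hLHS]
  rcases hβ with ⟨n, rfl⟩ | ⟨h1, h2⟩ | hb
  · have : ordIdx α kb D ((0, Finsupp.single n 1) : MIdx d) = (pDeg n : ℝ) := by
      simp [ordIdx, homog, kSum, nSum, npSum, brk, Finsupp.sum_zero_index,
        Finsupp.sum_single_index]
    rw [this]
    positivity
  · have hk : (kSum β : ℝ) = 1 := by
      simp [kSum, h1, Finsupp.sum_single_index]
    have hbr : (brk β : ℝ) = ((kb : ℝ) - 1) - (nSum β : ℝ) := by
      have : brk β = ((kb : ℤ) - 1) - (nSum β : ℤ) := by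
        simp [brk, h1, nSum, Finsupp.sum_single_index]
      rw [this]; push_cast; ring
    rw [ordIdx, homog, hk, hbr, h2]
    have hP : (0:ℝ) ≤ (npSum β : ℝ) := by positivity
    nlinarith [hP]
  · rw [ordIdx, homog]
    have hK : (0:ℝ) ≤ (kSum β : ℝ) := by positivity
    have hN : (0:ℝ) ≤ (nSum β : ℝ) := by positivity
    have hP : (0:ℝ) ≤ (npSum β : ℝ) := by positivity
    have hs : (0:ℝ) ≤ (brk β : ℝ) := by exact_mod_cast hb
    nlinarith [mul_nonneg ha.le hK, mul_nonneg (neg_nonneg.mpr hα.le) hN,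
      mul_nonneg (by linarith : (0:ℝ) ≤ D / 2) hs]
end

section
/- If β is a populated multiindex with |β| = 2, then either β = δ_n for some n ∈ ℕ^{1+d} with |n| = 2, or β = δ_k + k̲·δ_{n=0} for some k ≥ k̲. -/
lemma fsum_zero {ι : Type*} {f : ι →₀ ℕ} (h : f.sum (fun _ v => v) = 0) : f = 0 := by
  rw [Finsupp.sum] at h
  ext a
  by_cases ha : a ∈ f.support
  · exact Finset.sum_eq_zero_iff.mp h a ha
  · simpa using Finsupp.notMem_support_iff.mp ha

lemma fsum_one {ι : Type*} {f : ι →₀ ℕ} (h : f.sum (fun _ v => v) = 1) :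
    ∃ a, a ∈ f.support ∧ f = Finsupp.single a 1 := by
  classical
  rw [Finsupp.sum] at h
  have hcard : f.support.card ≤ 1 := by
    calc f.support.card = ∑ _i ∈ f.support, 1 := by simp
    _ ≤ ∑ i ∈ f.support, f i :=
      Finset.sum_le_sum fun i hi => Nat.one_le_iff_ne_zero.mpr (Finsupp.mem_support_iff.mp hi)
    _ = 1 := h
  have hne : f.support.Nonempty := by
    by_contra hc
    rw [Finset.not_nonempty_iff_eq_empty.mp hc] at h
    simp at h
  have hcard1 : f.support.card = 1 := le_antisymm hcard (Finset.card_pos.mpr hne)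
  obtain ⟨a, ha, hf⟩ := Finsupp.card_support_eq_one.mp hcard1
  refine ⟨a, Finsupp.mem_support_iff.mpr ha, ?_⟩
  have hfa : f a = 1 := by
    obtain ⟨b, hb⟩ := Finset.card_eq_one.mp hcard1
    have hab : a = b := by
      have h2 := Finsupp.mem_support_iff.mpr ha
      rw [hb] at h2; simpa using h2
    have hsum : ∑ i ∈ f.support, f i = f a := by rw [hb, hab]; simp
    omega
  rwa [hfa] at hf

/-- if `β` is populated with `|β| = 2`, then either `β = δ_n` with
`|n| = 2`, or `β = δ_k + k̲ · δ_{n=0}` for some `k ≥ k̲`. -/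
theorem classification_homog_two {d : ℕ} (α : ℝ) (kb : ℕ) (hkb : 3 ≤ kb)
    (hkbodd : Odd kb) (hα : α < 0) (hirr : Irrational α)
    (ha : 0 < 2 + ((kb : ℝ) - 1) * α) (β : MIdx d)
    (hsupp : ∀ k ∈ β.1.support, kb ≤ k ∧ Odd k)
    (hpop : Populated kb β) (h2 : homog α kb β = 2) :
    (∃ n : PIdx d, β = (0, Finsupp.single n 1) ∧ pDeg n = 2) ∨
      (∃ k : ℕ, kb ≤ k ∧ β = (Finsupp.single k 1, Finsupp.single (0 : PIdx d) kb)) := by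

  classical
  set K := kSum β with hKdef
  set N := nSum β with hNdef
  set P := npSum β with hPdef
  rw [homog] at h2
  set c : ℤ := 1 + ((kb : ℤ) - 1) * (K : ℤ) - (N : ℤ) with hcdef
  have hc : ((c : ℤ) : ℝ) = 1 + ((kb : ℝ) - 1) * (K : ℝ) - (N : ℝ) := by rw [hcdef]; push_cast; ring
  have hcz : c = 0 := by
    by_contra hne
    apply hirr
    refine ⟨((2 - 2 * K - P : ℤ) : ℚ) / ((c : ℤ) : ℚ), ?_⟩
    have hcr : ((c : ℤ) : ℝ) ≠ 0 := by exact_mod_cast hne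
    push_cast
    rw [div_eq_iff hcr, hc]
    push_cast
    linarith [h2]
  have hfac : 1 + ((kb : ℝ) - 1) * (K : ℝ) - (N : ℝ) = 0 := by rw [← hc, hcz]; simp
  have h2r : 2 * (K : ℝ) + (P : ℝ) = 2 := by
    rw [hfac, mul_zero, zero_add] at h2
    linarith
  have h2n : 2 * K + P = 2 := by exact_mod_cast h2r
  have hK1 : K ≤ 1 := by omega
  interval_cases K
  · -- K = 0 : left disjunct
    left
    have hb1 : β.1 = 0 := fsum_zero (hKdef.symm : kSum β = 0)
    have hN1 : N = 1 := by
      have : (1 : ℤ) + ((kb : ℤ) - 1) * (0 : ℤ) - (N : ℤ) = 0 := by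
        rw [hcdef] at hcz; exact_mod_cast hcz
      omega
    have hN1' : nSum β = 1 := by rw [← hNdef, hN1]
    obtain ⟨n, _, hb2⟩ := fsum_one hN1'
    have hP : P = pDeg n := by
      rw [hPdef, npSum, hb2, Finsupp.sum_single_index (by simp), mul_one]
    refine ⟨n, ?_, ?_⟩
    · exact Prod.ext hb1 hb2
    · omega
  · -- K = 1 : right disjunct
    right
    obtain ⟨k, hks, hb1⟩ := fsum_one (hKdef.symm : kSum β = 1)
    have hkbk : kb ≤ k := (hsupp k hks).1
    have hP0 : P = 0 := by omega
    have hNkb : N = kb := by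
      have h0 : (1 : ℤ) + ((kb : ℤ) - 1) * (1 : ℤ) - (N : ℤ) = 0 := by
        rw [hcdef] at hcz; exact_mod_cast hcz
      omega
    have hsub : β.2.support ⊆ {0} := by
      intro n hn
      have hv : β.2 n ≠ 0 := Finsupp.mem_support_iff.mp hn
      have hterm : pDeg n * β.2 n = 0 := by
        have : ∑ m ∈ β.2.support, pDeg m * β.2 m = 0 := by
          rw [← Finsupp.sum]; exact (hPdef ▸ hP0 : npSum β = 0)
        exact Finset.sum_eq_zero_iff.mp this n hn
      have hdeg : pDeg n = 0 := by
        rcases Nat.mul_eq_zero.mp hterm with h | h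
        · exact h
        · exact absurd h hv
      have hn0 : n = 0 := by
        rw [pDeg] at hdeg
        exact fsum_zero (by omega)
      simp [hn0]
    have hb2 : β.2 = Finsupp.single 0 (β.2 0) := Finsupp.support_subset_singleton.mp hsub
    have hval : β.2 0 = kb := by
      have : N = β.2 0 := by
        rw [hNdef, nSum, hb2]
        simp [Finsupp.sum_single_index]
      omega
    exact ⟨k, hkbk, Prod.ext hb1 (by rw [hb2, hval])⟩
end

section
/- If |β| < 2 and β is populated and not purely polynomial, then β(0) < k̲, where β(0) denotes the component of β at the multiindex n = 0 ∈ ℕ^{1+d}. -/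
/-- if `|β| < 2` and `β` is populated and not purely polynomial,
then `β(0) < k̲`, where `β(0)` is the component of `β` at `n = 0 ∈ ℕ^{1+d}`. -/
theorem component_at_zero_lt {d : ℕ} (α : ℝ) (kb : ℕ) (hkb : 3 ≤ kb)
    (hα : α < 0) (ha : 0 < 2 + ((kb : ℝ) - 1) * α) (β : MIdx d)
    (hpop : Populated kb β) (hnpp : ¬ ∃ n : PIdx d, β = (0, Finsupp.single n 1))
    (h2 : homog α kb β < 2) :
    β.2 (0 : PIdx d) < kb := by
  have hb0N : β.2 (0 : PIdx d) ≤ nSum β := by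
    by_cases h : β.2 (0 : PIdx d) = 0
    · simp [h]
    · exact Finset.single_le_sum (f := fun n => β.2 n) (fun i _ => Nat.zero_le _)
        (Finsupp.mem_support_iff.2 h)
  have hP : (0:ℝ) ≤ (npSum β : ℝ) := Nat.cast_nonneg _
  rcases hpop with h | ⟨h1, hN⟩ | hbrk
  · exact absurd h hnpp
  · exfalso
    have hK : kSum β = 1 := by
      unfold kSum; rw [h1, Finsupp.sum_single_index rfl]
    have heq : homog α kb β = 2 + (npSum β : ℝ) := by
      unfold homog; rw [hK, hN]; push_cast; ring
    linarith [heq ▸ h2]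
  · by_cases hK0 : β.1 = 0
    · have hNZ : (nSum β : ℤ) = β.2.sum fun _ v => (v:ℤ) := by
        simp [nSum, Finsupp.sum, Nat.cast_sum]
      have hS : β.1.sum (fun k v => ((k:ℤ)-1)*(v:ℤ)) = 0 := by simp [hK0]
      have hN0 : nSum β = 0 := by
        unfold brk at hbrk; rw [hS] at hbrk; omega
      have : β.2 (0 : PIdx d) = 0 := by omega
      omega
    · obtain ⟨k, hk⟩ := Finsupp.ne_iff.1 hK0
      simp only [Finsupp.coe_zero, Pi.zero_apply] at hk
      have hK1 : 1 ≤ kSum β := by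
        calc 1 ≤ β.1 k := Nat.one_le_iff_ne_zero.2 hk
        _ ≤ kSum β := Finset.single_le_sum (f := fun n => β.1 n)
            (fun i _ => Nat.zero_le _) (Finsupp.mem_support_iff.2 hk)
      by_contra hcon
      push_neg at hcon
      have hNkb : kb ≤ nSum β := le_trans hcon hb0N
      have hK1' : (1:ℝ) ≤ (kSum β : ℝ) := by exact_mod_cast hK1
      have hNkb' : (kb:ℝ) ≤ (nSum β : ℝ) := by exact_mod_cast hNkb
      unfold homog at h2
      nlinarith [mul_nonneg (sub_nonneg.2 hK1') ha.le,
        mul_nonneg (neg_nonneg.2 hα.le) (sub_nonneg.2 hNkb')]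
end
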